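/- With the setup of the previous identity, if additionally pareto(x) := ⟨c, x*⟩ − ⟨c, x⟩ ≤ Γ for some Γ ≥ 0, then for every ℓ ≥ 1 the number of coordinates j with x(λ)_j ≠ ⋆, d((c_j,A^j), H(λ)) ∈ ((log n / n)·2^ℓ, (log n / n)·2^{ℓ+1}], and x_j ≠ x(λ)_j is at most Γ·n/(log n · 2^ℓ). -/

import Mathlib

open Finset Matrix

/-! Shifting the first coordinate of the column `(c_j, A^j)` by its reduced cost
`r_j = c_j - ⟨λ, A^j⟩` lands in `H(λ)`, so the column lies within `|r_j|` of `H(λ)`.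
Since `A x* = A x`, the pareto gap equals `∑ r_j (x*_j - x_j)`; compatibility of `x*`
with `x(λ)` makes every summand nonnegative, and equal to `|r_j|` exactly when
`x_j ≠ x(λ)_j`. Each coordinate counted therefore contributes more than
`(log n / n)·2^ℓ` to a gap of at most `Γ`. -/

lemma infDist_toLp_cons_le {m : ℕ} (lam : Fin m → ℝ) (a : ℝ) (v : Fin m → ℝ) :
    Metric.infDist (WithLp.toLp 2 (Fin.cons a v : Fin (m + 1) → ℝ) : EuclideanSpace ℝ (Fin (m + 1)))
      {y | (1 : ℝ) * y 0 + ∑ i, (-lam i) * y i.succ = 0} ≤ |a - ∑ i, lam i * v i| := by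
  set s := ∑ i, lam i * v i
  set p : EuclideanSpace ℝ (Fin (m + 1)) := WithLp.toLp 2 (Fin.cons s v : Fin (m + 1) → ℝ)
  have hp : (1 : ℝ) * p 0 + ∑ i, (-lam i) * p i.succ = 0 := by
    simp [p, s, neg_mul, sum_neg_distrib]
  calc _ ≤ dist _ p := Metric.infDist_le_dist_of_mem hp
    _ = |a - s| := by
      rw [EuclideanSpace.dist_eq, Fin.sum_univ_succ]
      simp [p, Real.dist_eq, Real.sqrt_sq_eq_abs]

lemma dotProduct_sub_eq_of_mulVec_eq {R m n : Type*} [CommRing R] [Fintype m] [Fintype n]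
    {A : Matrix m n R} {xstar x : n → R} (heq : A *ᵥ xstar = A *ᵥ x) (c : n → R) (lam : m → R) :
    c ⬝ᵥ xstar - c ⬝ᵥ x = (c - lam ᵥ* A) ⬝ᵥ (xstar - x) := by
  rw [sub_dotProduct, ← dotProduct_mulVec, mulVec_sub, heq, sub_self,
    dotProduct_zero, sub_zero, dotProduct_sub]

lemma card_filter_le_div_of_sum_le {ι 𝕜 : Type*} [Fintype ι] [Field 𝕜] [LinearOrder 𝕜]
    [IsStrictOrderedRing 𝕜] (p : ι → Prop) [DecidablePred p] {f : ι → 𝕜} {τ Γ : 𝕜}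
    (hτ : 0 < τ) (hf : ∀ i, 0 ≤ f i) (hp : ∀ i, p i → τ ≤ f i) (hsum : ∑ i, f i ≤ Γ) :
    (#(univ.filter p) : 𝕜) ≤ Γ / τ := by
  rw [le_div_iff₀ hτ]
  calc (#(univ.filter p) : 𝕜) * τ ≤ ∑ i ∈ univ.filter p, f i := by
        simpa using card_nsmul_le_sum _ _ _ fun i hi => hp i (mem_filter.mp hi).2
    _ ≤ ∑ i, f i := sum_le_sum_of_subset_of_nonneg (subset_univ _) fun i _ _ => hf i
    _ ≤ Γ := hsum

section CompatibleCoordinate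

variable {r xstar x : ℝ} (hx : x = 0 ∨ x = 1) (hpos : 0 < r → xstar = 1) (hneg : r < 0 → xstar = 0)
include hx hpos hneg

lemma mul_sub_nonneg_of_compatible : 0 ≤ r * (xstar - x) := by
  rcases lt_trichotomy r 0 with h | rfl | h
  · rcases hx with rfl | rfl <;> rw [hneg h] <;> nlinarith
  · simp
  · rcases hx with rfl | rfl <;> rw [hpos h] <;> nlinarith

lemma mul_sub_eq_abs_of_compatible (hne : x ≠ if 0 < r then 1 else 0) :
    r * (xstar - x) = |r| := by
  rcases lt_trichotomy r 0 with h | rfl | h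
  · rw [if_neg h.not_gt] at hne
    rw [hneg h, hx.resolve_left hne, abs_of_neg h]
    ring
  · simp
  · rw [if_pos h] at hne
    rw [hpos h, hx.resolve_right hne, abs_of_pos h]
    ring

end CompatibleCoordinate

theorem stmt_9_general {m n : ℕ} (hn : 2 ≤ n)
    (A : Matrix (Fin m) (Fin n) ℝ) (c : Fin n → ℝ)
    (lam : Fin m → ℝ) (r : Fin n → ℝ) (hr : r = fun j => c j - ∑ i, lam i * A i j)
    (H : Set (EuclideanSpace ℝ (Fin (m + 1))))
    (hH : H = {y | (1 : ℝ) * y 0 + ∑ i, (-lam i) * y i.succ = 0})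
    (x xstar : Fin n → ℝ)
    (hx01 : ∀ j, x j = 0 ∨ x j = 1)
    (heq : A.mulVec xstar = A.mulVec x)
    (hcompat : ∀ j, (0 < r j → xstar j = 1) ∧ (r j < 0 → xstar j = 0))
    (Γ : ℝ)
    (hpareto : (∑ j, c j * xstar j) - ∑ j, c j * x j ≤ Γ)
    (ℓ : ℕ) :
    ((Finset.univ.filter (fun j : Fin n => r j ≠ 0 ∧
        Metric.infDist (show EuclideanSpace ℝ (Fin (m + 1)) from
          WithLp.toLp 2 (Fin.cons (c j) (fun i => A i j) : Fin (m + 1) → ℝ)) H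
          ∈ Set.Ioc (Real.log n / n * 2 ^ ℓ) (Real.log n / n * 2 ^ (ℓ + 1)) ∧
        x j ≠ (if 0 < r j then 1 else 0))).card : ℝ)
      ≤ Γ * n / (Real.log n * 2 ^ ℓ) := by
  subst hH
  have hlog : 0 < Real.log n := Real.log_pos (by exact_mod_cast hn)
  have hn0 : (0 : ℝ) < n := by positivity
  have hgap : ∑ j, r j * (xstar j - x j) ≤ Γ := by
    rw [hr]
    exact (dotProduct_sub_eq_of_mulVec_eq heq c lam).symm.le.trans hpareto
  rw [show Γ * n / (Real.log n * 2 ^ ℓ) = Γ / (Real.log n / n * 2 ^ ℓ) by field_simp]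
  refine card_filter_le_div_of_sum_le _ (by positivity)
    (fun j => mul_sub_nonneg_of_compatible (hx01 j) (hcompat j).1 (hcompat j).2) ?_ hgap
  rintro j ⟨-, hdist, hxj⟩
  rw [mul_sub_eq_abs_of_compatible (hx01 j) (hcompat j).1 (hcompat j).2 hxj]
  refine hdist.1.le.trans ?_
  simpa [hr] using infDist_toLp_cons_le lam (c j) (fun i => A i j)

/-- with the setup of the pareto-gap identity, if
`pareto(x) = ⟨c,x*⟩ − ⟨c,x⟩ ≤ Γ`, then for every `ℓ ≥ 1` the number of
coordinates `j` with `x(λ)_j ≠ ⋆`, distance of the column `(c_j, A^j)` to `H(λ)`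
in `((log n / n)·2^ℓ, (log n / n)·2^{ℓ+1}]`, and `x_j ≠ x(λ)_j`, is at most
`Γ·n / (log n · 2^ℓ)`. -/
theorem stmt_9 {m n : ℕ} (hn : 2 ≤ n)
    (A : Matrix (Fin m) (Fin n) ℝ) (c : Fin n → ℝ)
    (lam : Fin m → ℝ) (r : Fin n → ℝ) (hr : r = fun j => c j - ∑ i, lam i * A i j)
    (H : Set (EuclideanSpace ℝ (Fin (m + 1))))
    (hH : H = {y | (1 : ℝ) * y 0 + ∑ i, (-lam i) * y i.succ = 0})
    (x xstar : Fin n → ℝ)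
    (hx01 : ∀ j, x j = 0 ∨ x j = 1)
    (hxstar : ∀ j, xstar j ∈ Set.Icc (0:ℝ) 1)
    (heq : A.mulVec xstar = A.mulVec x)
    (hcompat : ∀ j, (0 < r j → xstar j = 1) ∧ (r j < 0 → xstar j = 0))
    (Γ : ℝ) (hΓ : 0 ≤ Γ)
    (hpareto : (∑ j, c j * xstar j) - ∑ j, c j * x j ≤ Γ)
    (ℓ : ℕ) (hℓ : 1 ≤ ℓ) :
    ((Finset.univ.filter (fun j : Fin n => r j ≠ 0 ∧
        Metric.infDist (show EuclideanSpace ℝ (Fin (m + 1)) from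
          WithLp.toLp 2 (Fin.cons (c j) (fun i => A i j) : Fin (m + 1) → ℝ)) H
          ∈ Set.Ioc (Real.log n / n * 2 ^ ℓ) (Real.log n / n * 2 ^ (ℓ + 1)) ∧
        x j ≠ (if 0 < r j then 1 else 0))).card : ℝ)
      ≤ Γ * n / (Real.log n * 2 ^ ℓ) :=
  stmt_9_general hn A c lam r hr H hH x xstar hx01 heq hcompat Γ hpareto ℓ
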